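/- Let 𝓡 := {R₁, …, R_q} be a (k, ℓ, m)-compact set in T_h, and let S ⊆ V(T_h) with ⋃𝓡 ⊆ S and 1 ≤ |S| < 2^{m−ℓ−2}. Then there exists a (2k, ℓ + log₂|S| + 2, m)-compact set 𝓡' := {R₁', …, R_q'} in T_h that is compatible with S. -/

import Mathlib

/-- Vertices of the complete binary tree of height `h`: a vertex of depth `i`
is a pair `⟨i, j⟩` where `j < 2 ^ i` is its left-to-right index at depth `i`. -/
abbrev BT (h : ℕ) := Σ i : Fin (h + 1), Fin (2 ^ (i : ℕ))

/-- The root of the complete binary tree. -/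
def btRoot (h : ℕ) : BT h := ⟨0, ⟨0, by positivity⟩⟩

/-- `p` is the parent of `v` in the complete binary tree: the children of
`⟨i, j⟩` are `⟨i + 1, 2 * j⟩` (left) and `⟨i + 1, 2 * j + 1⟩` (right). -/
def IsParent {h : ℕ} (p v : BT h) : Prop :=
  (v.1 : ℕ) = (p.1 : ℕ) + 1 ∧ (v.2 : ℕ) / 2 = (p.2 : ℕ)

/-- The complete binary tree `T_h` of height `h` as a simple graph. -/
def btTree (h : ℕ) : SimpleGraph (BT h) :=
  SimpleGraph.fromRel (fun p v => IsParent p v)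

/-- `a` is an ancestor of `v` (this includes `a = v`). -/
def IsAncestor {h : ℕ} (a v : BT h) : Prop :=
  (a.1 : ℕ) ≤ (v.1 : ℕ) ∧ (a.2 : ℕ) = (v.2 : ℕ) / 2 ^ ((v.1 : ℕ) - (a.1 : ℕ))

/-- A set of vertices of `T_h` is unrelated if no element of it is an ancestor of
another element of it. -/
def Unrelated {h : ℕ} (B : Set (BT h)) : Prop :=
  ∀ a ∈ B, ∀ v ∈ B, a ≠ v → ¬IsAncestor a v

/-- `v` is a leaf of `T_h`, i.e. has depth `h`. -/
def IsLeaf {h : ℕ} (v : BT h) : Prop := (v.1 : ℕ) = h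

/-- The graph `G_h`: the complete binary tree `T_h` together with, for each depth
`i ∈ {1, …, h}`, the edges of a path `D_i` through all the vertices of depth `i`
in left-to-right order. -/
def gGraph (h : ℕ) : SimpleGraph (BT h) :=
  SimpleGraph.fromRel (fun a b =>
    IsParent a b ∨ ((a.1 : ℕ) = (b.1 : ℕ) ∧ (a.2 : ℕ) + 1 = (b.2 : ℕ)))

/-- `T_h − S` contains a path from `v` to a leaf of `T_h`. -/
def ReachesLeafAvoiding {h : ℕ} (S : Set (BT h)) (v : BT h) : Prop :=
  ∃ (hv : v ∈ {u : BT h | u ∉ S}) (l : BT h) (hl : l ∈ {u : BT h | u ∉ S}),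
    IsLeaf l ∧ ((btTree h).induce {u : BT h | u ∉ S}).Reachable ⟨v, hv⟩ ⟨l, hl⟩

/-- `v` is compatible with `S`: the parent of `v` is in `S` and `T_h − S` contains a
path from `v` to a leaf of `T_h`. -/
def CompatibleVert {h : ℕ} (S : Finset (BT h)) (v : BT h) : Prop :=
  (∃ p : BT h, IsParent p v ∧ p ∈ S) ∧ ReachesLeafAvoiding (S : Set (BT h)) v

/-- `R = {R 1, …, R q}` is a `(k, ℓ, m)`-compact family in `T_h`: every part is
unrelated of size at least `k`; the part `R i` has a common ancestor `a i` at
`T_h`-distance at most `ℓ` from each of its elements; and `a 1, …, a q` are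
unrelated and each has height at least `m`. -/
def CompactFam {h : ℕ} (k : ℕ) (ℓ m : ℝ) {q : ℕ} (R : Fin q → Finset (BT h)) : Prop :=
  ∃ a : Fin q → BT h,
    (∀ i, Unrelated (R i : Set (BT h)) ∧ k ≤ (R i).card) ∧
    (∀ i, ∀ v ∈ R i, IsAncestor (a i) v ∧ (((btTree h).dist v (a i) : ℕ) : ℝ) ≤ ℓ) ∧
    (∀ i j : Fin q, i ≠ j → ¬IsAncestor (a i) (a j)) ∧
    (∀ i, m ≤ (h : ℝ) - (((a i).1 : ℕ) : ℝ))

open Finset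

/-!
Below each child `c` of a vertex `v ∈ S` there are `2 ^ (t - 1) > |S|` descendants at depth
`depth v + t`, so one of them, `x`, has no descendant in `S`; the leftmost branch below `x`
then avoids `S`. On the path from `v` down to `x`, the child of the deepest vertex of `S` is
compatible with `S`. Doing this for both children of every vertex of `R i` doubles `R i`: the
new vertices lie below distinct children of an unrelated set, so they are unrelated, and they
are at most `t ≤ log₂ |S| + 2` levels deeper. The height bound on the `a i` guarantees that
these `t` levels exist.
-/

section BinaryTree

variable {h : ℕ}

theorem BT.ext {u v : BT h} (h1 : (u.1 : ℕ) = v.1) (h2 : (u.2 : ℕ) = v.2) : u = v := by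
  obtain ⟨⟨i, hi⟩, ⟨j, hj⟩⟩ := u
  obtain ⟨⟨i', hi'⟩, ⟨j', hj'⟩⟩ := v
  simp only at h1 h2
  subst h1 h2
  rfl

theorem BT.depth_le (u : BT h) : (u.1 : ℕ) ≤ h := Nat.lt_succ_iff.mp u.1.isLt

/-- A leaf is its own `child`. -/
def BT.child (v : BT h) (b : Fin 2) : BT h :=
  if hv : (v.1 : ℕ) < h then
    ⟨⟨v.1 + 1, by omega⟩, ⟨2 * v.2 + b, by
      have := v.2.isLt
      have := b.isLt
      rw [pow_succ]
      omega⟩⟩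
  else v

theorem BT.child_snd {v : BT h} (hv : (v.1 : ℕ) < h) (b : Fin 2) :
    ((v.child b).2 : ℕ) = 2 * v.2 + b := by
  rw [BT.child, dif_pos hv]

theorem BT.isParent_child {v : BT h} (hv : (v.1 : ℕ) < h) (b : Fin 2) : IsParent v (v.child b) :=
  ⟨by rw [BT.child, dif_pos hv], by rw [BT.child_snd hv]; omega⟩

theorem BT.child_injective {v : BT h} (hv : (v.1 : ℕ) < h) : Function.Injective v.child :=
  fun b b' hbb' => by
    have := congrArg (fun u : BT h => (u.2 : ℕ)) hbb'
    simp only [BT.child_snd hv] at this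
    omega

theorem exists_isParent {v : BT h} (hv : 0 < (v.1 : ℕ)) : ∃ p, IsParent p v := by
  have hpow : 2 ^ (v.1 : ℕ) = 2 * 2 ^ ((v.1 : ℕ) - 1) := by rw [← pow_succ']; congr 1; omega
  have hlt : (v.2 : ℕ) < 2 * 2 ^ ((v.1 : ℕ) - 1) := hpow ▸ v.2.isLt
  exact ⟨⟨⟨v.1 - 1, by omega⟩, ⟨v.2 / 2, Nat.div_lt_of_lt_mul hlt⟩⟩,
    by simp only; omega, rfl⟩

theorem IsAncestor.refl (v : BT h) : IsAncestor v v := ⟨le_rfl, by simp⟩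

theorem IsAncestor.trans {a b c : BT h} (hab : IsAncestor a b) (hbc : IsAncestor b c) :
    IsAncestor a c := by
  refine ⟨hab.1.trans hbc.1, ?_⟩
  rw [hab.2, hbc.2, Nat.div_div_eq_div_mul, ← pow_add]
  have := hab.1; have := hbc.1
  congr 2
  omega

theorem IsAncestor.of_depth_le {a b v : BT h} (ha : IsAncestor a v) (hb : IsAncestor b v)
    (hab : (a.1 : ℕ) ≤ b.1) : IsAncestor a b := by
  refine ⟨hab, ?_⟩
  rw [ha.2, hb.2, Nat.div_div_eq_div_mul, ← pow_add]
  have := hb.1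
  congr 2
  omega

theorem IsAncestor.total {a b v : BT h} (ha : IsAncestor a v) (hb : IsAncestor b v) :
    IsAncestor a b ∨ IsAncestor b a :=
  (le_total (a.1 : ℕ) b.1).imp (ha.of_depth_le hb) (hb.of_depth_le ha)

theorem IsAncestor.eq_of_depth_eq {a v : BT h} (ha : IsAncestor a v) (hd : (a.1 : ℕ) = v.1) :
    a = v :=
  BT.ext hd (by rw [ha.2, hd, Nat.sub_self, pow_zero, Nat.div_one])

theorem IsParent.isAncestor {p v : BT h} (hp : IsParent p v) : IsAncestor p v := by
  have hd : (v.1 : ℕ) - p.1 = 1 := by have := hp.1; omega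
  exact ⟨by omega, by rw [hd, pow_one, hp.2]⟩

theorem btTree_adj_of_isParent {p v : BT h} (hp : IsParent p v) : (btTree h).Adj p v :=
  (SimpleGraph.fromRel_adj _ _ _).2 ⟨by rintro rfl; have := hp.1; omega, Or.inl hp⟩

theorem btTree_adj_depth {u v : BT h} (huv : (btTree h).Adj u v) :
    (v.1 : ℕ) = u.1 + 1 ∨ (u.1 : ℕ) = v.1 + 1 :=
  ((SimpleGraph.fromRel_adj _ _ _).1 huv).2.imp (·.1) (·.1)

theorem depth_le_depth_add_length {u v : BT h} (W : (btTree h).Walk u v) :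
    (u.1 : ℕ) ≤ v.1 + W.length := by
  induction W with
  | nil => simp
  | cons hadj _ ih => rw [SimpleGraph.Walk.length_cons]; have := btTree_adj_depth hadj; omega

theorem IsAncestor.exists_walk {a v : BT h} (ha : IsAncestor a v) :
    ∃ W : (btTree h).Walk v a, W.length = v.1 - a.1 := by
  induction hd : (v.1 : ℕ) - a.1 generalizing v with
  | zero =>
    obtain rfl := ha.eq_of_depth_eq (by have := ha.1; omega)
    exact ⟨.nil, rfl⟩
  | succ n ih =>
    obtain ⟨p, hp⟩ := exists_isParent (v := v) (by omega)
    have := hp.1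
    obtain ⟨W, hW⟩ := ih (ha.of_depth_le hp.isAncestor (by omega)) (by omega)
    exact ⟨.cons (btTree_adj_of_isParent hp).symm W, by simp [hW]⟩

theorem IsAncestor.dist_eq {a v : BT h} (ha : IsAncestor a v) :
    (btTree h).dist v a = v.1 - a.1 := by
  obtain ⟨W, hW⟩ := ha.exists_walk
  obtain ⟨P, hP⟩ := SimpleGraph.Reachable.exists_walk_length_eq_dist ⟨W⟩
  have := depth_le_depth_add_length P
  have := SimpleGraph.dist_le W
  omega

end BinaryTree

section Compatibility

variable {h : ℕ}

theorem ReachesLeafAvoiding.of_adj {S : Set (BT h)} {u v : BT h} (hu : u ∉ S)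
    (huv : (btTree h).Adj u v) (hv : ReachesLeafAvoiding S v) : ReachesLeafAvoiding S u := by
  obtain ⟨hvS, l, hl, hleaf, hreach⟩ := hv
  exact ⟨hu, l, hl, hleaf, (SimpleGraph.Adj.reachable (G := (btTree h).induce {u | u ∉ S})
    (u := ⟨u, hu⟩) (v := ⟨v, hvS⟩) huv).trans hreach⟩

theorem reachesLeafAvoiding_of_forall_not_isAncestor {S : Set (BT h)} {x : BT h}
    (hx : ∀ s ∈ S, ¬IsAncestor x s) : ReachesLeafAvoiding S x := by
  induction hd : h - (x.1 : ℕ) generalizing x with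
  | zero =>
    have hxS : x ∉ S := fun hxS => hx x hxS (.refl x)
    exact ⟨hxS, x, hxS, by have := x.depth_le; unfold IsLeaf; omega, .refl _⟩
  | succ n ih =>
    have hc := BT.isParent_child (v := x) (by omega) 0
    refine .of_adj (fun hxS => hx x hxS (.refl x)) (btTree_adj_of_isParent hc) (ih ?_ ?_)
    · exact fun s hs hcs => hx s hs (hc.isAncestor.trans hcs)
    · have := hc.1; omega

theorem exists_compatibleVert_between {S : Finset (BT h)} {y x : BT h} (hyx : IsAncestor y x)
    (hy : y ∈ S) (hx : ReachesLeafAvoiding (S : Set (BT h)) x) :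
    ∃ w, IsAncestor w x ∧ (y.1 : ℕ) < w.1 ∧ CompatibleVert S w := by
  induction hd : (x.1 : ℕ) - y.1 generalizing x with
  | zero =>
    obtain rfl := hyx.eq_of_depth_eq (by have := hyx.1; omega)
    exact absurd hy hx.1
  | succ n ih =>
    obtain ⟨p, hp⟩ := exists_isParent (v := x) (by omega)
    have := hp.1
    by_cases hpS : p ∈ S
    · exact ⟨x, .refl x, by omega, ⟨p, hp, hpS⟩, hx⟩
    · obtain ⟨w, hwp, hyw, hw⟩ := ih (hyx.of_depth_le hp.isAncestor (by omega))
        (.of_adj hpS (btTree_adj_of_isParent hp) hx) (by omega)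
      exact ⟨w, hwp.trans hp.isAncestor, hyw, hw⟩

theorem exists_descendant_forall_not_isAncestor (S : Finset (BT h)) {u : BT h} {n : ℕ}
    (hn : (u.1 : ℕ) + n ≤ h) (hS : S.card < 2 ^ n) :
    ∃ x, IsAncestor u x ∧ (x.1 : ℕ) = u.1 + n ∧ ∀ s ∈ S, ¬IsAncestor x s := by
  have hpos : 0 < 2 ^ n := Nat.pow_pos two_pos
  let desc (r : Fin (2 ^ n)) : BT h :=
    ⟨⟨u.1 + n, by omega⟩, ⟨2 ^ n * u.2 + r, by
      calc 2 ^ n * (u.2 : ℕ) + r < 2 ^ n * (u.2 + 1) := by rw [mul_add_one]; omega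
        _ ≤ 2 ^ n * 2 ^ (u.1 : ℕ) := Nat.mul_le_mul_left _ u.2.isLt
        _ = 2 ^ ((u.1 : ℕ) + n) := by rw [pow_add, mul_comm]⟩⟩
  have hdesc (r : Fin (2 ^ n)) : IsAncestor u (desc r) :=
    ⟨by simp [desc], by simp [desc, Nat.mul_add_div hpos, Nat.div_eq_of_lt r.isLt]⟩
  by_contra! hall
  choose s hs hxs using fun r => hall (desc r) (hdesc r) rfl
  obtain ⟨r, r', hne, hrr'⟩ := Fintype.exists_ne_map_eq_of_card_lt
    (fun r => (⟨s r, hs r⟩ : S)) (by simpa using hS)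
  have hsr : s r = s r' := congrArg Subtype.val hrr'
  have hanc : IsAncestor (desc r) (desc r') := (hxs r).of_depth_le (hsr ▸ hxs r') le_rfl
  have hdd : desc r = desc r' := hanc.eq_of_depth_eq rfl
  exact hne (Fin.ext (by simpa [desc] using congrArg (fun x : BT h => (x.2 : ℕ)) hdd))

theorem exists_compatibleVert_below_child {S : Finset (BT h)} {v : BT h} (hv : v ∈ S) {n : ℕ}
    (hn : (v.1 : ℕ) + n + 1 ≤ h) (hS : S.card < 2 ^ n) (b : Fin 2) :
    ∃ w, IsAncestor (v.child b) w ∧ (w.1 : ℕ) ≤ v.1 + n + 1 ∧ CompatibleVert S w := by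
  have hc := BT.isParent_child (v := v) (by omega) b
  have := hc.1
  obtain ⟨x, hcx, hxd, hxS⟩ := exists_descendant_forall_not_isAncestor S (u := v.child b)
    (by omega) hS
  obtain ⟨w, hwx, hvw, hw⟩ := exists_compatibleVert_between (hc.isAncestor.trans hcx) hv
    (reachesLeafAvoiding_of_forall_not_isAncestor hxS)
  exact ⟨w, hcx.of_depth_le hwx (by omega), by have := hwx.1; omega, hw⟩

end Compatibility

section Families

variable {h : ℕ}

theorem Unrelated.eq_of_isAncestor_child {B : Set (BT h)} (hB : Unrelated B) {v v' : BT h}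
    (hv : v ∈ B) (hv' : v' ∈ B) (hvh : (v.1 : ℕ) < h) (hv'h : (v'.1 : ℕ) < h) {b b' : Fin 2}
    (hc : IsAncestor (v.child b) (v'.child b')) : v = v' ∧ b = b' := by
  have hcv := BT.isParent_child hvh b
  have hcv' := BT.isParent_child hv'h b'
  have hvv' : IsAncestor v v' := (hcv.isAncestor.trans hc).of_depth_le hcv'.isAncestor
    (by have := hc.1; have := hcv.1; have := hcv'.1; omega)
  obtain rfl : v = v' := by_contra fun hne => hB v hv v' hv' hne hvv'
  exact ⟨rfl, BT.child_injective hvh (hc.eq_of_depth_eq (by rw [hcv.1, hcv'.1]))⟩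

theorem Unrelated.eq_of_isAncestor_of_isAncestor_child {B : Set (BT h)} (hB : Unrelated B)
    {v v' z : BT h} (hv : v ∈ B) (hv' : v' ∈ B) (hvh : (v.1 : ℕ) < h)
    (hv'h : (v'.1 : ℕ) < h) {b b' : Fin 2} (hz : IsAncestor (v.child b) z)
    (hz' : IsAncestor (v'.child b') z) :
    v = v' ∧ b = b' :=
  (hz.total hz').elim (hB.eq_of_isAncestor_child hv hv' hvh hv'h)
    fun hc => (hB.eq_of_isAncestor_child hv' hv hv'h hvh hc).imp Eq.symm Eq.symm

theorem Unrelated.image_descendants_of_children [DecidableEq (BT h)] {B : Finset (BT h)}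
    (hB : Unrelated (B : Set (BT h))) (hleaf : ∀ v ∈ B, (v.1 : ℕ) < h)
    (W : BT h → Fin 2 → BT h) (hW : ∀ v ∈ B, ∀ b, IsAncestor (v.child b) (W v b)) :
    Unrelated (((B ×ˢ univ).image fun p => W p.1 p.2 : Finset (BT h)) : Set (BT h)) ∧
      ((B ×ˢ univ).image fun p => W p.1 p.2).card = 2 * B.card := by
  have hsep : ∀ p ∈ B ×ˢ univ, ∀ p' ∈ B ×ˢ univ,
      IsAncestor (W p.1 p.2) (W p'.1 p'.2) → p = p' := by
    rintro ⟨v, b⟩ hp ⟨v', b'⟩ hp' hanc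
    simp only [mem_product, mem_univ, and_true] at hp hp'
    obtain ⟨rfl, rfl⟩ := hB.eq_of_isAncestor_of_isAncestor_child hp hp' (hleaf v hp)
      (hleaf v' hp') ((hW v hp b).trans hanc) (hW v' hp' b')
    rfl
  refine ⟨?_, ?_⟩
  · simp only [Unrelated, coe_image, Set.forall_mem_image]
    exact fun p hp p' hp' hne hanc =>
      hne (congrArg (fun p => W p.1 p.2) (hsep p hp p' hp' hanc))
  · have hinj : Set.InjOn (fun p : BT h × Fin 2 => W p.1 p.2) ↑(B ×ˢ (univ : Finset (Fin 2)))
      :=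
      fun p hp p' hp' he => hsep p hp p' hp' (by simp only at he; rw [he]; exact .refl _)
    rw [card_image_of_injOn hinj, card_product, card_univ, Fintype.card_fin, mul_comm]

theorem CompactFam.mono_dist {k : ℕ} {ℓ ℓ' m : ℝ} {q : ℕ} {R : Fin q → Finset (BT h)}
    (hR : CompactFam k ℓ m R) (hℓ : ℓ ≤ ℓ') : CompactFam k ℓ' m R := by
  obtain ⟨a, hunrel, hdist, hanc, hheight⟩ := hR
  exact ⟨a, hunrel, fun i v hv => ⟨(hdist i v hv).1, (hdist i v hv).2.trans hℓ⟩, hanc,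
    hheight⟩

theorem CompactFam.exists_compatible {k : ℕ} {ℓ m : ℝ} {q : ℕ} {R : Fin q → Finset (BT h)}
    (hR : CompactFam k ℓ m R) {S : Finset (BT h)} (hsub : ∀ i, R i ⊆ S) {n : ℕ}
    (hS : S.card < 2 ^ n) (hm : ℓ + n + 1 ≤ m) :
    ∃ R' : Fin q → Finset (BT h), CompactFam (2 * k) (ℓ + (n + 1)) m R' ∧
      ∀ i, ∀ v ∈ R' i, CompatibleVert S v := by
  classical
  obtain ⟨a, hunrel, hdist, hanc, hheight⟩ := hR
  have hdepth : ∀ i, ∀ v ∈ R i, (v.1 : ℕ) + n + 1 ≤ h := by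
    intro i v hv
    have hva := (hdist i v hv).2
    rw [(hdist i v hv).1.dist_eq, Nat.cast_sub (hdist i v hv).1.1] at hva
    have := hheight i
    exact_mod_cast (by linarith : ((v.1 : ℕ) : ℝ) + n + 1 ≤ h)
  have : Nonempty (BT h) := ⟨btRoot h⟩
  choose! W hW using fun v b (hv : v ∈ S ∧ (v.1 : ℕ) + n + 1 ≤ h) =>
    exists_compatibleVert_below_child hv.1 hv.2 hS b
  have hWi : ∀ i, ∀ v ∈ R i, ∀ b, _ := fun i v hv b => hW v b ⟨hsub i hv, hdepth i v hv⟩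
  refine ⟨fun i => (R i ×ˢ univ).image fun p => W p.1 p.2,
    ⟨a, fun i => ?_, ?_, hanc, hheight⟩, ?_⟩
  · have := (hunrel i).1.image_descendants_of_children
      (fun v hv => by have := hdepth i v hv; omega) W (fun v hv b => (hWi i v hv b).1)
    exact ⟨this.1, this.2 ▸ Nat.mul_le_mul_left 2 (hunrel i).2⟩
  · simp only [mem_image, mem_product, mem_univ, and_true, Prod.exists]
    rintro i _ ⟨v, b, hv, rfl⟩
    obtain ⟨hvw, hwd, -⟩ := hWi i v hv b
    have hav := (hdist i v hv).1
    have hvh : (v.1 : ℕ) < h := by have := hdepth i v hv; omega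
    have haw := hav.trans ((BT.isParent_child hvh b).isAncestor.trans hvw)
    have hva := (hdist i v hv).2
    have hwd' : (((W v b).1 : ℕ) : ℝ) ≤ (v.1 : ℕ) + n + 1 := by exact_mod_cast hwd
    rw [hav.dist_eq, Nat.cast_sub hav.1] at hva
    refine ⟨haw, ?_⟩
    rw [haw.dist_eq, Nat.cast_sub haw.1]
    linarith
  · simp only [mem_image, mem_product, mem_univ, and_true, Prod.exists]
    rintro i _ ⟨v, b, hv, rfl⟩
    exact (hWi i v hv b).2.2

end Families

/-- If `R` is a `(k, ℓ, m)`-compact family `{R 1, …, R q}` in `T_h` and `S ⊇ ⋃ R`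
satisfies `1 ≤ |S| < 2 ^ (m - ℓ - 2)`, then there is a
`(2 k, ℓ + log₂ |S| + 2, m)`-compact family `{R' 1, …, R' q}` that is compatible
with `S`. -/
theorem stmt12 (h q k : ℕ) (ℓ m : ℝ) (R : Fin q → Finset (BT h))
    (hR : CompactFam k ℓ m R) (S : Finset (BT h))
    (hsub : ∀ i : Fin q, R i ⊆ S)
    (hS1 : 1 ≤ S.card) (hS2 : (S.card : ℝ) < (2 : ℝ) ^ (m - ℓ - 2)) :
    ∃ R' : Fin q → Finset (BT h),
      CompactFam (2 * k) (ℓ + Real.logb 2 S.card + 2) m R' ∧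
      ∀ i : Fin q, ∀ v ∈ R' i, CompatibleVert S v := by
  have hlog : (Nat.log 2 S.card : ℝ) ≤ Real.logb 2 S.card := Real.natLog_le_logb _ _
  have hlt : Real.logb 2 S.card < m - ℓ - 2 :=
    (Real.logb_lt_iff_lt_rpow one_lt_two (by exact_mod_cast hS1)).2 hS2
  obtain ⟨R', hR', hcompat⟩ := hR.exists_compatible hsub
    (Nat.lt_pow_succ_log_self one_lt_two S.card) (by push_cast; linarith)
  exact ⟨R', hR'.mono_dist (by push_cast; linarith), hcompat⟩
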